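/- arXiv:2601.18016 — 3 statements merged into one kernel-verified Lean document; each statement's English description precedes it below -/
import Mathlib

section
/- Let H be a complex Hilbert space, (e_i)_{i∈ι} a Hilbert basis of H, χ : ι → ℝ with χ_i > 0, and α : ι → ℂ with α_i ≠ 0 for all i. Fix s ≥ 0, δ > 0, ε > 0. Let q, u_b, u_b^δ ∈ H satisfy: (i) ⟨u_b, e_i⟩ = α_i ⟨q, e_i⟩ for all i (the data u_b is the image of q under the diagonal operator with eigenvalues α_i); (ii) ‖u_b^δ − u_b‖ ≤ δ; (iii) M := Σ_i χ_i^s |⟨q, e_i⟩|² < ∞; (iv) m_ε := inf{ |α_i| : χ_i ≤ 1/ε } > 0. Define the low-rank reconstruction π_ε q^δ := Σ_{i : χ_i ≤ 1/ε} (⟨u_b^δ, e_i⟩ / α_i) e_i. Then ‖q − π_ε q^δ‖ ≤ ε^{s/2} M^{1/2} + δ / m_ε. (Theorem 3.4 of the paper, stated with the customized Sobolev norm ‖q‖_{H_c^s} = M^{1/2}; in the paper H = L²(B), (e_i) = (ψ_{m,n,ℓ}) are the 3D PSWFs, α_i the prolate eigenvalues and χ_i the Sturm–Liouville eigenvalues.)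 -/
open scoped ComplexInnerProductSpace ENNReal

private lemma rpow_two_eq (x : ℝ) : x ^ (2:ℝ) = x ^ 2 := by
  rw [show (2:ℝ) = ((2:ℕ):ℝ) by norm_num, Real.rpow_natCast]

private lemma rpow_toReal_two (x : ℝ) : x ^ ((2:ℝ≥0∞)).toReal = x ^ 2 := by
  rw [show ((2:ℝ≥0∞)).toReal = (2:ℝ) by norm_num, rpow_two_eq]

lemma aux_hassum_norm {H : Type*} [NormedAddCommGroup H] [InnerProductSpace ℂ H]
    [CompleteSpace H] {ι : Type*} (e : HilbertBasis ι ℂ H) (c : ι → ℂ)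
    (hc : Summable fun i => ‖c i‖ ^ 2) :
    ∃ v : H, HasSum (fun i => c i • e i) v ∧
      ‖v‖ = (∑' i, ‖c i‖ ^ 2) ^ ((1 : ℝ) / 2) := by
  have hc' : Summable fun i => ‖c i‖ ^ ((2 : ℝ≥0∞)).toReal := by
    simpa only [rpow_toReal_two] using hc
  have hmem : Memℓp c 2 := memℓp_gen hc'
  refine ⟨e.repr.symm ⟨c, hmem⟩, e.hasSum_repr_symm ⟨c, hmem⟩, ?_⟩
  have := lp.norm_eq_tsum_rpow (by norm_num : 0 < (2 : ℝ≥0∞).toReal)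
    (⟨c, hmem⟩ : lp (fun _ : ι => ℂ) 2)
  rw [LinearIsometryEquiv.norm_map, this]
  simp only [rpow_toReal_two]
  norm_num

lemma aux_inner_sq {H : Type*} [NormedAddCommGroup H] [InnerProductSpace ℂ H]
    [CompleteSpace H] {ι : Type*} (e : HilbertBasis ι ℂ H) (x : H) :
    HasSum (fun i => ‖⟪e i, x⟫‖ ^ 2) (‖x‖ ^ 2) := by
  have hmem := lp.memℓp (e.repr x)
  have hsum : Summable fun i => ‖e.repr x i‖ ^ ((2 : ℝ≥0∞)).toReal :=
    hmem.summable (by norm_num)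
  have hkey : ∀ i, ‖e.repr x i‖ ^ ((2:ℝ≥0∞)).toReal = ‖⟪e i, x⟫‖ ^ 2 := fun i => by
    rw [e.repr_apply_apply, rpow_toReal_two]
  have hsum2 : Summable fun i => ‖⟪e i, x⟫‖ ^ 2 := by
    simpa only [hkey] using hsum
  have hnorm := lp.norm_eq_tsum_rpow (by norm_num : 0 < (2 : ℝ≥0∞).toReal) (e.repr x)
  rw [e.repr.norm_map] at hnorm
  simp only [hkey, show 1 / ((2:ℝ≥0∞)).toReal = ((2:ℝ))⁻¹ by norm_num] at hnorm
  have hnn : (0:ℝ) ≤ ∑' i, ‖⟪e i, x⟫‖ ^ 2 := tsum_nonneg fun i => by positivity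
  have : ‖x‖ ^ 2 = ∑' i, ‖⟪e i, x⟫‖ ^ 2 := by
    rw [hnorm, ← rpow_two_eq, ← Real.rpow_mul hnn]
    norm_num
  exact this ▸ hsum2.hasSum

/-- **Theorem 3.4.** A priori estimate for the low-rank reconstruction:
if `⟨u_b, e_i⟩ = α_i ⟨q, e_i⟩`, `‖u_b^δ − u_b‖ ≤ δ`, `M = Σ_i χ_i^s |⟨q, e_i⟩|² < ∞` and
`m_ε = inf{|α_i| : χ_i ≤ 1/ε} > 0`, then the low-rank reconstruction
`π_ε q^δ = Σ_{χ_i ≤ 1/ε} (⟨u_b^δ, e_i⟩/α_i) e_i` satisfies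
`‖q − π_ε q^δ‖ ≤ ε^{s/2} M^{1/2} + δ/m_ε`. -/
theorem low_rank_a_priori_estimate
    {H : Type*} [NormedAddCommGroup H] [InnerProductSpace ℂ H] [CompleteSpace H]
    {ι : Type*} (e : HilbertBasis ι ℂ H)
    (χ : ι → ℝ) (hχ : ∀ i, 0 < χ i)
    (α : ι → ℂ) (hα : ∀ i, α i ≠ 0)
    (s : ℝ) (hs : 0 ≤ s) (δ : ℝ) (hδ : 0 < δ) (ε : ℝ) (hε : 0 < ε)
    (q ub ubδ : H)
    (hdata : ∀ i, ⟪e i, ub⟫ = α i * ⟪e i, q⟫)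
    (hnoise : ‖ubδ - ub‖ ≤ δ)
    (M : ℝ) (hM : HasSum (fun i => χ i ^ s * ‖⟪e i, q⟫‖ ^ 2) M)
    (hm : 0 < sInf {r : ℝ | ∃ i, χ i ≤ 1 / ε ∧ r = ‖α i‖}) :
    ‖q - ∑' i, if χ i ≤ 1 / ε then (⟪e i, ubδ⟫ / α i) • e i else 0‖
      ≤ ε ^ (s / 2) * M ^ ((1 : ℝ) / 2)
        + δ / sInf {r : ℝ | ∃ i, χ i ≤ 1 / ε ∧ r = ‖α i‖} := by
  set m := sInf {r : ℝ | ∃ i, χ i ≤ 1 / ε ∧ r = ‖α i‖} with hm_def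
  have hSbdd : BddBelow {r : ℝ | ∃ i, χ i ≤ 1 / ε ∧ r = ‖α i‖} :=
    ⟨0, fun r ⟨i, _, hr⟩ => hr ▸ norm_nonneg _⟩
  have hmle : ∀ i, χ i ≤ 1 / ε → m ≤ ‖α i‖ := fun i h =>
    csInf_le hSbdd ⟨i, h, rfl⟩
  have hMnn : 0 ≤ M := hM.tsum_eq ▸ tsum_nonneg
    (fun i => mul_nonneg (Real.rpow_nonneg (hχ i).le s) (sq_nonneg _))
  set chigh : ι → ℂ := fun i => if χ i ≤ 1 / ε then 0 else ⟪e i, q⟫ with hchigh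
  set w : H := ub - ubδ with hw_def
  set clow : ι → ℂ := fun i => if χ i ≤ 1 / ε then ⟪e i, w⟫ / α i else 0 with hclow
  have hw : ‖w‖ ≤ δ := by rw [hw_def, norm_sub_rev]; exact hnoise
  -- high-frequency bound
  have hhigh_le : ∀ i, ‖chigh i‖ ^ 2 ≤ ε ^ s * (χ i ^ s * ‖⟪e i, q⟫‖ ^ 2) := by
    intro i
    by_cases h : χ i ≤ 1 / ε
    · simp only [hchigh, if_pos h, norm_zero]
      have h1 : (0:ℝ) ≤ ε ^ s := Real.rpow_nonneg hε.le s
      have h2 : (0:ℝ) ≤ χ i ^ s := Real.rpow_nonneg (hχ i).le s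
      simpa using mul_nonneg h1 (mul_nonneg h2 (sq_nonneg ‖⟪e i, q⟫‖))
    · simp only [hchigh, if_neg h]
      push_neg at h
      have h1 : (1:ℝ) ≤ ε * χ i := by
        rw [div_lt_iff₀ hε] at h
        nlinarith
      have h2 : (1:ℝ) ≤ ε ^ s * χ i ^ s := by
        rw [← Real.mul_rpow hε.le (hχ i).le]
        calc (1:ℝ) = 1 ^ s := (Real.one_rpow s).symm
        _ ≤ (ε * χ i) ^ s := Real.rpow_le_rpow zero_le_one h1 hs
      nlinarith [sq_nonneg ‖⟪e i, q⟫‖, norm_nonneg (⟪e i, q⟫)]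
  have hsumM : Summable fun i => ε ^ s * (χ i ^ s * ‖⟪e i, q⟫‖ ^ 2) :=
    (hM.mul_left (ε ^ s)).summable
  have hsum_high : Summable fun i => ‖chigh i‖ ^ 2 :=
    Summable.of_nonneg_of_le (fun i => by positivity) hhigh_le hsumM
  have htsum_high : ∑' i, ‖chigh i‖ ^ 2 ≤ ε ^ s * M := by
    calc ∑' i, ‖chigh i‖ ^ 2 ≤ ∑' i, ε ^ s * (χ i ^ s * ‖⟪e i, q⟫‖ ^ 2) :=
      Summable.tsum_le_tsum hhigh_le hsum_high hsumM
    _ = ε ^ s * M := (hM.mul_left (ε ^ s)).tsum_eq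
  -- low-frequency bound
  have hW : HasSum (fun i => ‖⟪e i, w⟫‖ ^ 2) (‖w‖ ^ 2) := aux_inner_sq e w
  have hlow_le : ∀ i, ‖clow i‖ ^ 2 ≤ ‖⟪e i, w⟫‖ ^ 2 / m ^ 2 := by
    intro i
    by_cases h : χ i ≤ 1 / ε
    · simp only [hclow, if_pos h, norm_div]
      rw [div_pow]
      exact div_le_div_of_nonneg_left (sq_nonneg _) (pow_pos hm 2)
        (pow_le_pow_left₀ hm.le (hmle i h) 2)
    · simp only [hclow, if_neg h, norm_zero]
      norm_num
      exact div_nonneg (sq_nonneg _) (sq_nonneg _)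
  have hsumW : Summable fun i => ‖⟪e i, w⟫‖ ^ 2 / m ^ 2 := (hW.summable).div_const _
  have hsum_low : Summable fun i => ‖clow i‖ ^ 2 :=
    Summable.of_nonneg_of_le (fun i => by positivity) hlow_le hsumW
  have htsum_low : ∑' i, ‖clow i‖ ^ 2 ≤ (δ / m) ^ 2 := by
    calc ∑' i, ‖clow i‖ ^ 2 ≤ ∑' i, ‖⟪e i, w⟫‖ ^ 2 / m ^ 2 :=
      Summable.tsum_le_tsum hlow_le hsum_low hsumW
    _ = ‖w‖ ^ 2 / m ^ 2 := (hW.div_const _).tsum_eq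
    _ ≤ δ ^ 2 / m ^ 2 :=
      (div_le_div_iff_of_pos_right (pow_pos hm 2)).mpr (pow_le_pow_left₀ (norm_nonneg w) hw 2)
    _ = (δ / m) ^ 2 := (div_pow δ m 2).symm
  obtain ⟨vhigh, hvhigh, hnhigh⟩ := aux_hassum_norm e chigh hsum_high
  obtain ⟨vlow, hvlow, hnlow⟩ := aux_hassum_norm e clow hsum_low
  have hq : HasSum (fun i => ⟪e i, q⟫ • e i) q := by
    simpa only [e.repr_apply_apply] using e.hasSum_repr q
  have hcomb := hq.sub (hvhigh.add hvlow)
  have heq : (fun i => ⟪e i, q⟫ • e i - (chigh i • e i + clow i • e i))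
      = fun i => if χ i ≤ 1 / ε then (⟪e i, ubδ⟫ / α i) • e i else 0 := by
    funext i
    by_cases h : χ i ≤ 1 / ε
    · simp only [hchigh, hclow, if_pos h, zero_smul, zero_add, hw_def,
        inner_sub_right, hdata i]
      rw [← sub_smul]
      congr 1
      have hai := hα i
      field_simp
      ring
    · simp only [hchigh, hclow, if_neg h, zero_smul, add_zero, sub_self]
  rw [heq] at hcomb
  rw [hcomb.tsum_eq, sub_sub_cancel]
  have hbound_high : ‖vhigh‖ ≤ ε ^ (s / 2) * M ^ ((1:ℝ) / 2) := by
    rw [hnhigh]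
    calc (∑' i, ‖chigh i‖ ^ 2) ^ ((1:ℝ)/2)
        ≤ (ε ^ s * M) ^ ((1:ℝ)/2) :=
          Real.rpow_le_rpow (tsum_nonneg fun i => by positivity) htsum_high (by norm_num)
      _ = ε ^ (s/2) * M ^ ((1:ℝ)/2) := by
          rw [Real.mul_rpow (Real.rpow_nonneg hε.le s) hMnn, ← Real.rpow_mul hε.le,
            show s * ((1:ℝ)/2) = s/2 by ring]
  have hbound_low : ‖vlow‖ ≤ δ / m := by
    rw [hnlow]
    have hdm : (0:ℝ) ≤ δ / m := by positivity
    calc (∑' i, ‖clow i‖ ^ 2) ^ ((1:ℝ)/2)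
        ≤ ((δ / m) ^ 2) ^ ((1:ℝ)/2) :=
          Real.rpow_le_rpow (tsum_nonneg fun i => by positivity) htsum_low (by norm_num)
      _ = δ / m := by
          rw [← rpow_two_eq, ← Real.rpow_mul hdm]
          norm_num
  calc ‖vhigh + vlow‖ ≤ ‖vhigh‖ + ‖vlow‖ := norm_add_le _ _
    _ ≤ ε ^ (s/2) * M ^ ((1:ℝ)/2) + δ / m := add_le_add hbound_high hbound_low
end

section
/- Let c ∈ ℝ. For x, y ∈ ℝ³ let K(x,y) = exp(i c ⟨x,y⟩). Then applying the Sturm–Liouville operator in the x-variable to the kernel yields (−Δ_x + (x·∇_x)² + 3 x·∇_x + c²|x|²) K(x,y) = ( c²|x|² + c²|y|² − c² ⟨x,y⟩² + 4 i c ⟨x,y⟩ ) K(x,y), an expression symmetric in x and y; consequently (D_c)_x e^{ic⟨x,y⟩} = (D_c)_y e^{ic⟨x,y⟩} for all x, y ∈ ℝ³. (This kernel symmetry underlies the paper's claim in Section 3.1 that the restricted Fourier integral operator F_c and the differential operator D_c commute.) -/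
open MeasureTheory
open scoped RealInnerProductSpace

/-- The Euclidean Laplacian `Δu` of a complex-valued function on `ℝ³`. -/
noncomputable def lapC (u : EuclideanSpace ℝ (Fin 3) → ℂ) (x : EuclideanSpace ℝ (Fin 3)) : ℂ :=
  ∑ i : Fin 3, fderiv ℝ (fderiv ℝ u) x (EuclideanSpace.single i 1) (EuclideanSpace.single i 1)

/-- The radial derivative `(x·∇u)(x) = ⟨x, ∇u(x)⟩` (directional derivative in direction `x`). -/
noncomputable def xGradC (u : EuclideanSpace ℝ (Fin 3) → ℂ) (x : EuclideanSpace ℝ (Fin 3)) : ℂ :=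
  fderiv ℝ u x x

/-- The Sturm–Liouville operator `D_c u = −Δu + (x·∇)²u + 3(x·∇u) + c²|x|²u`
for complex-valued `u`. -/
noncomputable def DcC (c : ℝ) (u : EuclideanSpace ℝ (Fin 3) → ℂ)
    (x : EuclideanSpace ℝ (Fin 3)) : ℂ :=
  - lapC u x + xGradC (xGradC u) x + 3 * xGradC u x + (c ^ 2 * ‖x‖ ^ 2 : ℝ) * u x


/-! The kernel is `exp ∘ L` for the real-linear functional `L v = i c ⟨v, y⟩`, so each derivative
just multiplies by `L`: the Hessian is `K · L ⊗ L`, whence `Δ K = (∑ᵢ L(eᵢ)²) K = -c²|y|² K`,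
`(x·∇) K = L(x) K` and `(x·∇)² K = (L(x)² + L(x)) K`. Adding up gives the stated factor, which
is symmetric in `x` and `y`. -/

open Complex

section CexpOfLinear

variable {E : Type*} [NormedAddCommGroup E] [NormedSpace ℝ E] (L : E →L[ℝ] ℂ)

lemma fderiv_cexp_clm : fderiv ℝ (fun x => cexp (L x)) = fun x => cexp (L x) • L :=
  funext fun _ => L.hasFDerivAt.cexp.fderiv

lemma fderiv_cexp_clm_apply_self :
    (fun x => fderiv ℝ (fun x => cexp (L x)) x x) = fun x => cexp (L x) * L x := by
  simp only [fderiv_cexp_clm, smul_apply, smul_eq_mul]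

lemma fderiv_fderiv_cexp_clm_apply (x v w : E) :
    fderiv ℝ (fderiv ℝ (fun x => cexp (L x))) x v w = cexp (L x) * L v * L w := by
  rw [fderiv_cexp_clm, (L.hasFDerivAt.cexp.smul_const L).fderiv]
  simp only [ContinuousLinearMap.smulRight_apply, smul_apply, smul_eq_mul]

lemma fderiv_cexp_clm_mul_apply_self (x : E) :
    fderiv ℝ (fun x => cexp (L x) * L x) x x = cexp (L x) * (L x ^ 2 + L x) := by
  have hmul : HasFDerivAt (fun x => cexp (L x) * L x) (cexp (L x) • L + L x • cexp (L x) • L) x :=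
    L.hasFDerivAt.cexp.mul L.hasFDerivAt
  rw [hmul.fderiv]
  simp only [add_apply, smul_apply, smul_eq_mul]
  ring

end CexpOfLinear

lemma DcC_cexp_clm (c : ℝ) (L : EuclideanSpace ℝ (Fin 3) →L[ℝ] ℂ)
    (x : EuclideanSpace ℝ (Fin 3)) :
    DcC c (fun x => cexp (L x)) x
      = (-∑ i, L (EuclideanSpace.single i 1) ^ 2 + L x ^ 2 + 4 * L x + (c ^ 2 * ‖x‖ ^ 2 : ℝ))
          * cexp (L x) := by
  have hlap : lapC (fun x => cexp (L x)) x
      = cexp (L x) * ∑ i, L (EuclideanSpace.single i 1) ^ 2 := by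
    simp only [lapC, fderiv_fderiv_cexp_clm_apply, Finset.mul_sum, mul_assoc, sq]
  have hrad : xGradC (fun x => cexp (L x)) = fun x => cexp (L x) * L x :=
    fderiv_cexp_clm_apply_self L
  rw [DcC, hlap, hrad, xGradC, fderiv_cexp_clm_mul_apply_self]
  ring

section KernelPhase

variable {E : Type*} [NormedAddCommGroup E] [InnerProductSpace ℝ E]

noncomputable def kernelPhase (c : ℝ) (y : E) : E →L[ℝ] ℂ :=
  (I * c) • ofRealCLM.comp (innerSL ℝ y)

lemma kernelPhase_apply (c : ℝ) (y v : E) : kernelPhase c y v = I * c * (⟪v, y⟫ : ℝ) := by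
  simp [kernelPhase, real_inner_comm y v, mul_assoc]

end KernelPhase

lemma sum_kernelPhase_single_sq (c : ℝ) (y : EuclideanSpace ℝ (Fin 3)) :
    ∑ i, kernelPhase c y (EuclideanSpace.single i 1) ^ 2 = -(c ^ 2 * ‖y‖ ^ 2 : ℝ) := by
  simp only [kernelPhase_apply, EuclideanSpace.inner_single_left, EuclideanSpace.real_norm_sq_eq]
  push_cast
  simp only [mul_pow, I_sq, map_one, Finset.mul_sum]
  simp [Finset.sum_neg_distrib]

lemma DcC_kernel (c : ℝ) (x y : EuclideanSpace ℝ (Fin 3)) :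
    DcC c (fun x' => cexp (I * c * ⟪x', y⟫)) x
      = ((c ^ 2 * ‖x‖ ^ 2 + c ^ 2 * ‖y‖ ^ 2 - c ^ 2 * ⟪x, y⟫ ^ 2 : ℝ)
          + 4 * I * c * (⟪x, y⟫ : ℝ)) * cexp (I * c * ⟪x, y⟫) := by
  simp_rw [← kernelPhase_apply]
  rw [DcC_cexp_clm, sum_kernelPhase_single_sq, kernelPhase_apply]
  push_cast
  linear_combination ((c : ℂ) ^ 2 * (⟪x, y⟫ : ℝ) ^ 2 * cexp (I * c * ⟪x, y⟫)) * I_sq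

/-- **Kernel symmetry (Section 3.1).** Applying `D_c` in the `x`-variable to the Fourier kernel
`K(x,y) = e^{ic⟨x,y⟩}` yields `(c²|x|² + c²|y|² − c²⟨x,y⟩² + 4ic⟨x,y⟩)K(x,y)`, an expression
symmetric in `x` and `y`; consequently `(D_c)_x K = (D_c)_y K`. -/
theorem kernel_symmetry_Dc (c : ℝ) (x y : EuclideanSpace ℝ (Fin 3)) :
    DcC c (fun x' => Complex.exp (Complex.I * c * ⟪x', y⟫)) x
        = ((c ^ 2 * ‖x‖ ^ 2 + c ^ 2 * ‖y‖ ^ 2 - c ^ 2 * ⟪x, y⟫ ^ 2 : ℝ)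
            + 4 * Complex.I * c * (⟪x, y⟫ : ℝ))
          * Complex.exp (Complex.I * c * ⟪x, y⟫)
      ∧ DcC c (fun x' => Complex.exp (Complex.I * c * ⟪x', y⟫)) x
        = DcC c (fun y' => Complex.exp (Complex.I * c * ⟪x, y'⟫)) y := by
  refine ⟨DcC_kernel c x y, ?_⟩
  simp_rw [real_inner_comm _ x]
  rw [DcC_kernel, DcC_kernel, real_inner_comm x y]
  congr 3
  ring
end

section
/- Let B be the open unit ball in ℝ³ and c > 0. Let q ∈ L¹(ℝ³) and define the Born data u_b(p) = ∫_{ℝ³} e^{ic⟨p,y⟩} q(y) dy for p ∈ B. Let ψ ∈ L²(B) be real-valued and α ∈ ℂ \ {0} satisfy ∫_B e^{ic⟨x,y⟩} ψ(y) dy = α ψ(x) for almost every x ∈ B, and define the extension Ψ(y) = α^{-1} ∫_B e^{ic⟨x,y⟩} ψ(x) dx for y ∈ ℝ³. Then α^{-1} ∫_B u_b(p) ψ(p) dp = ∫_{ℝ³} q(y) Ψ(y) dy. In particular, if q = q_i + q_o with q_i supported in B and q_o supported in ℝ³ \\ closure(B), then α^{-1} ⟨u_b, ψ⟩_{L²(B)}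 = ⟨q_i, Ψ⟩_{L²(ℝ³)} + ⟨q_o, Ψ⟩_{L²(ℝ³)}, where on B the extension Ψ agrees with ψ. (This is equation (3.15) of the paper, the basis of the localized imaging technique.) -/
open MeasureTheory
open scoped RealInnerProductSpace

/-!
Writing `u_b` as the integral operator with kernel `e^{ic⟨p,y⟩}` applied to `q`, the left-hand side
is a double integral of `e^{ic⟨p,y⟩} q(y) ψ(p)` over `B × ℝ³`. The kernel has modulus one and
`ψ ∈ L²(B) ⊂ L¹(B)`, so the integrand is integrable on the product and Fubini lets us integrate
over `p` first, which yields the integral defining `Ψ(y)`. The same integrability shows that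
`q Ψ` is integrable for every integrable `q`, so the pairing with `Ψ` is additive in `q`.
-/

section BoundedKernel

variable {X Y 𝕜 : Type*} [MeasurableSpace X] [MeasurableSpace Y] [RCLike 𝕜]
  {μ : Measure X} {ν : Measure Y}
  {K : X × Y → 𝕜} {C : ℝ} {f : X → 𝕜} {g : Y → 𝕜}

theorem integrable_kernel_mul_prod (hK : AEStronglyMeasurable K (μ.prod ν))
    (hKC : ∀ z, ‖K z‖ ≤ C) (hf : Integrable f μ) (hg : Integrable g ν) :
    Integrable (fun z => K z * (f z.1 * g z.2)) (μ.prod ν) :=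
  (hf.mul_prod hg).bdd_mul hK (ae_of_all _ hKC)

variable [SFinite μ] [SFinite ν]

theorem integral_integral_kernel_mul_comm (hK : AEStronglyMeasurable K (μ.prod ν))
    (hKC : ∀ z, ‖K z‖ ≤ C) (hf : Integrable f μ) (hg : Integrable g ν) :
    ∫ x, (∫ y, K (x, y) * g y ∂ν) * f x ∂μ = ∫ y, g y * ∫ x, K (x, y) * f x ∂μ ∂ν := by
  calc ∫ x, (∫ y, K (x, y) * g y ∂ν) * f x ∂μ
      = ∫ x, ∫ y, K (x, y) * (f x * g y) ∂ν ∂μ := by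
        refine integral_congr_ae (ae_of_all _ fun x => ?_)
        simp only [← integral_mul_const]
        exact integral_congr_ae (ae_of_all _ fun y => by ring)
    _ = ∫ y, ∫ x, K (x, y) * (f x * g y) ∂μ ∂ν :=
        integral_integral_swap (integrable_kernel_mul_prod hK hKC hf hg)
    _ = ∫ y, g y * ∫ x, K (x, y) * f x ∂μ ∂ν := by
        refine integral_congr_ae (ae_of_all _ fun y => ?_)
        simp only [← integral_const_mul]
        exact integral_congr_ae (ae_of_all _ fun x => by ring)

theorem integrable_mul_integral_kernel (hK : AEStronglyMeasurable K (μ.prod ν))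
    (hKC : ∀ z, ‖K z‖ ≤ C) (hf : Integrable f μ) (hg : Integrable g ν) :
    Integrable (fun y => g y * ∫ x, K (x, y) * f x ∂μ) ν := by
  refine (integrable_kernel_mul_prod hK hKC hf hg).integral_prod_right.congr
    (ae_of_all _ fun y => ?_)
  simp only [← integral_const_mul]
  exact integral_congr_ae (ae_of_all _ fun x => by ring)

end BoundedKernel

section FourierKernel

variable {E : Type*} [NormedAddCommGroup E] [InnerProductSpace ℝ E]

theorem norm_exp_I_mul_inner (c : ℝ) (x y : E) : ‖Complex.exp (Complex.I * c * ⟪x, y⟫)‖ = 1 := by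
  rw [mul_assoc, ← Complex.ofReal_mul]
  exact Complex.norm_exp_I_mul_ofReal _

theorem continuous_exp_I_mul_inner (c : ℝ) :
    Continuous fun z : E × E => Complex.exp (Complex.I * c * ⟪z.1, z.2⟫) := by
  fun_prop

end FourierKernel

theorem localized_imaging_identity_general (c : ℝ)
    (q qi qo : EuclideanSpace ℝ (Fin 3) → ℂ)
    (hq : Integrable q (volume : Measure (EuclideanSpace ℝ (Fin 3))))
    (hqi : Integrable qi (volume : Measure (EuclideanSpace ℝ (Fin 3))))
    (hqo : Integrable qo (volume : Measure (EuclideanSpace ℝ (Fin 3))))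
    (hdecomp : q = qi + qo)
    (ub : EuclideanSpace ℝ (Fin 3) → ℂ)
    (hub : ∀ p, ub p = ∫ y : EuclideanSpace ℝ (Fin 3),
      Complex.exp (Complex.I * c * ⟪p, y⟫) * q y)
    (ψ : EuclideanSpace ℝ (Fin 3) → ℝ) (α : ℂ)
    (hψ : MemLp ψ 2 (volume.restrict (Metric.ball (0 : EuclideanSpace ℝ (Fin 3)) 1)))
    (Ψ : EuclideanSpace ℝ (Fin 3) → ℂ)
    (hΨ : ∀ y, Ψ y = α⁻¹ * ∫ x in Metric.ball (0 : EuclideanSpace ℝ (Fin 3)) 1,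
      Complex.exp (Complex.I * c * ⟪x, y⟫) * (ψ x : ℂ)) :
    α⁻¹ * (∫ p in Metric.ball (0 : EuclideanSpace ℝ (Fin 3)) 1, ub p * (ψ p : ℂ))
        = ∫ y : EuclideanSpace ℝ (Fin 3), q y * Ψ y
      ∧ α⁻¹ * (∫ p in Metric.ball (0 : EuclideanSpace ℝ (Fin 3)) 1, ub p * (ψ p : ℂ))
        = (∫ y : EuclideanSpace ℝ (Fin 3), qi y * Ψ y)
          + ∫ y : EuclideanSpace ℝ (Fin 3), qo y * Ψ y := by
  set B := Metric.ball (0 : EuclideanSpace ℝ (Fin 3)) 1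
  set K := fun z : EuclideanSpace ℝ (Fin 3) × EuclideanSpace ℝ (Fin 3) =>
    Complex.exp (Complex.I * c * ⟪z.1, z.2⟫)
  have : IsFiniteMeasure (volume.restrict B) := isFiniteMeasure_restrict.2 measure_ball_lt_top.ne
  have hψB : Integrable (fun p => (ψ p : ℂ)) (volume.restrict B) :=
    (hψ.integrable one_le_two).ofReal
  have hK : AEStronglyMeasurable K ((volume.restrict B).prod volume) :=
    (continuous_exp_I_mul_inner c).aestronglyMeasurable
  have hK1 (z) : ‖K z‖ ≤ 1 := (norm_exp_I_mul_inner c z.1 z.2).le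
  have hΨK : Ψ = fun y => α⁻¹ * ∫ x in B, K (x, y) * ψ x := funext hΨ
  have hmain : α⁻¹ * ∫ p in B, ub p * ψ p = ∫ y, q y * Ψ y := by
    simp only [hub, hΨK, mul_left_comm (q _), integral_const_mul]
    rw [integral_integral_kernel_mul_comm hK hK1 hψB hq]
  have hΨint {g} (hg : Integrable g) : Integrable (fun y => g y * Ψ y) := by
    simpa only [hΨK, mul_left_comm (g _)] using
      (integrable_mul_integral_kernel hK hK1 hψB hg).const_mul α⁻¹
  refine ⟨hmain, ?_⟩
  rw [hmain, ← integral_add (hΨint hqi) (hΨint hqo), hdecomp]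
  simp only [Pi.add_apply, add_mul]

/-- **Equation (3.15): basis of the localized imaging technique.** Let `q ∈ L¹(ℝ³)` with Born
data `u_b(p) = ∫_{ℝ³} e^{ic⟨p,y⟩} q(y) dy`, and let `ψ ∈ L²(B)` be a real-valued eigenfunction
of the restricted Fourier integral operator with nonzero eigenvalue `α`, extended to `ℝ³` by
`Ψ(y) = α⁻¹ ∫_B e^{ic⟨x,y⟩} ψ(x) dx`. Then `α⁻¹ ∫_B u_b ψ = ∫_{ℝ³} q Ψ`; in particular, for a
decomposition `q = q_i + q_o` with `q_i` supported in `B` and `q_o` supported in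
`ℝ³ \ closure(B)`, `α⁻¹ ⟨u_b, ψ⟩_{L²(B)} = ⟨q_i, Ψ⟩_{L²(ℝ³)} + ⟨q_o, Ψ⟩_{L²(ℝ³)}`. -/
theorem localized_imaging_identity (c : ℝ) (hc : 0 < c)
    (q qi qo : EuclideanSpace ℝ (Fin 3) → ℂ)
    (hq : Integrable q (volume : Measure (EuclideanSpace ℝ (Fin 3))))
    (hqi : Integrable qi (volume : Measure (EuclideanSpace ℝ (Fin 3))))
    (hqo : Integrable qo (volume : Measure (EuclideanSpace ℝ (Fin 3))))
    (hdecomp : q = qi + qo)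
    (hsuppi : ∀ x, x ∉ Metric.ball (0 : EuclideanSpace ℝ (Fin 3)) 1 → qi x = 0)
    (hsuppo : ∀ x, x ∈ Metric.closedBall (0 : EuclideanSpace ℝ (Fin 3)) 1 → qo x = 0)
    (ub : EuclideanSpace ℝ (Fin 3) → ℂ)
    (hub : ∀ p, ub p = ∫ y : EuclideanSpace ℝ (Fin 3),
      Complex.exp (Complex.I * c * ⟪p, y⟫) * q y)
    (ψ : EuclideanSpace ℝ (Fin 3) → ℝ) (α : ℂ) (hα : α ≠ 0)
    (hψ : MemLp ψ 2 (volume.restrict (Metric.ball (0 : EuclideanSpace ℝ (Fin 3)) 1)))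
    (heig : ∀ᵐ x ∂(volume.restrict (Metric.ball (0 : EuclideanSpace ℝ (Fin 3)) 1)),
      (∫ y in Metric.ball (0 : EuclideanSpace ℝ (Fin 3)) 1,
        Complex.exp (Complex.I * c * ⟪x, y⟫) * (ψ y : ℂ)) = α * (ψ x : ℂ))
    (Ψ : EuclideanSpace ℝ (Fin 3) → ℂ)
    (hΨ : ∀ y, Ψ y = α⁻¹ * ∫ x in Metric.ball (0 : EuclideanSpace ℝ (Fin 3)) 1,
      Complex.exp (Complex.I * c * ⟪x, y⟫) * (ψ x : ℂ)) :
    α⁻¹ * (∫ p in Metric.ball (0 : EuclideanSpace ℝ (Fin 3)) 1, ub p * (ψ p : ℂ))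
        = ∫ y : EuclideanSpace ℝ (Fin 3), q y * Ψ y
      ∧ α⁻¹ * (∫ p in Metric.ball (0 : EuclideanSpace ℝ (Fin 3)) 1, ub p * (ψ p : ℂ))
        = (∫ y : EuclideanSpace ℝ (Fin 3), qi y * Ψ y)
          + ∫ y : EuclideanSpace ℝ (Fin 3), qo y * Ψ y :=
  localized_imaging_identity_general c q qi qo hq hqi hqo hdecomp ub hub ψ α hψ Ψ hΨ
end
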